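/- For the 2D forward-backward discrete Dirac symbol, G₀ₕᶠᵇ(ξ)² = g₀ₕᶠᵇ(ξ)·I where g₀ₕᶠᵇ(ξ) = m² + (4/h²)sin²(hξ₁/2) + (4/h²)sin²(hξ₂/2) + (2/h²)[sin(h(ξ₁-ξ₂)) - sin(hξ₁) + sin(hξ₂)]. -/

import Mathlib

noncomputable def G0fb2 (h m ξ₁ ξ₂ : ℝ) : Matrix (Fin 2) (Fin 2) ℂ :=
  !![(m : ℂ),
     -(1 / (Complex.I * h)) * (Complex.exp (-(Complex.I) * h * ξ₁) - 1)
       + (1 / (h : ℂ)) * (Complex.exp (-(Complex.I) * h * ξ₂) - 1);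
     (1 / (Complex.I * h)) * (Complex.exp (Complex.I * h * ξ₁) - 1)
       + (1 / (h : ℂ)) * (Complex.exp (Complex.I * h * ξ₂) - 1),
     (-m : ℂ)]

noncomputable def g0fb2 (h m ξ₁ ξ₂ : ℝ) : ℝ :=
  m ^ 2 + 4 / h ^ 2 * Real.sin (h * ξ₁ / 2) ^ 2 + 4 / h ^ 2 * Real.sin (h * ξ₂ / 2) ^ 2
    + 2 / h ^ 2 * (Real.sin (h * (ξ₁ - ξ₂)) - Real.sin (h * ξ₁) + Real.sin (h * ξ₂))

/-! The off-diagonal entries of `G0fb2` are complex conjugates `conj c` and `c`, so the matrix is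
traceless and Hermitian and squares to `(m² + |c|²) I`. Writing `θᵢ = h ξᵢ`, one has
`h c = (sin θ₁ + cos θ₂ - 1) + (1 - cos θ₁ + sin θ₂) i`, and `|h c|²` expands, via
`1 - cos θ = 2 sin² (θ / 2)` and the subtraction formula for `sin (θ₁ - θ₂)`,
to `h² (g0fb2 - m²)`. -/

open Complex ComplexConjugate

theorem Matrix.sq_traceless_fin_two {R : Type*} [CommRing R] (a b c : R) :
    !![a, b; c, -a] ^ 2 = (a * a + b * c) • (1 : Matrix (Fin 2) (Fin 2) R) := by
  ext i j
  fin_cases i <;> fin_cases j <;> simp [sq, Matrix.mul_apply] <;> ring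

theorem Real.sq_add_sq_eq_sin_sq_half (θ₁ θ₂ : ℝ) :
    (Real.sin θ₁ + Real.cos θ₂ - 1) ^ 2 + (1 - Real.cos θ₁ + Real.sin θ₂) ^ 2
      = 4 * Real.sin (θ₁ / 2) ^ 2 + 4 * Real.sin (θ₂ / 2) ^ 2
        + 2 * (Real.sin (θ₁ - θ₂) - Real.sin θ₁ + Real.sin θ₂) := by
  have half (θ : ℝ) : Real.sin (θ / 2) ^ 2 = 1 / 2 - Real.cos θ / 2 := by
    rw [Real.sin_sq_eq_half_sub, two_mul, add_halves]
  rw [half, half, Real.sin_sub]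
  linear_combination Real.sin_sq_add_cos_sq θ₁ + Real.sin_sq_add_cos_sq θ₂

noncomputable def fbDiffSymbol (h ξ₁ ξ₂ : ℝ) : ℂ :=
  (1 / (I * h)) * (exp (I * h * ξ₁) - 1) + (1 / (h : ℂ)) * (exp (I * h * ξ₂) - 1)

theorem G0fb2_eq (h m ξ₁ ξ₂ : ℝ) :
    G0fb2 h m ξ₁ ξ₂
      = !![(m : ℂ), conj (fbDiffSymbol h ξ₁ ξ₂); fbDiffSymbol h ξ₁ ξ₂, -m] := by
  simp [G0fb2, fbDiffSymbol, ← exp_conj]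

theorem fbDiffSymbol_eq (h ξ₁ ξ₂ : ℝ) :
    fbDiffSymbol h ξ₁ ξ₂
      = ((Real.sin (h * ξ₁) + Real.cos (h * ξ₂) - 1) / h : ℝ)
        + ((1 - Real.cos (h * ξ₁) + Real.sin (h * ξ₂)) / h : ℝ) * I := by
  have hexp (θ : ℝ) : exp (I * h * θ) = Real.cos (h * θ) + Real.sin (h * θ) * I := by
    push_cast
    rw [← exp_mul_I]
    ring_nf
  rw [fbDiffSymbol, hexp, hexp, one_div, mul_inv, inv_I]
  push_cast
  linear_combination (-(h : ℂ)⁻¹ * sin (h * ξ₁)) * I_sq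

theorem normSq_fbDiffSymbol (h ξ₁ ξ₂ : ℝ) :
    normSq (fbDiffSymbol h ξ₁ ξ₂)
      = 4 / h ^ 2 * Real.sin (h * ξ₁ / 2) ^ 2 + 4 / h ^ 2 * Real.sin (h * ξ₂ / 2) ^ 2
        + 2 / h ^ 2
          * (Real.sin (h * (ξ₁ - ξ₂)) - Real.sin (h * ξ₁) + Real.sin (h * ξ₂)) := by
  rw [fbDiffSymbol_eq, normSq_add_mul_I, div_pow, div_pow, ← add_div,
    Real.sq_add_sq_eq_sin_sq_half, mul_sub]
  ring

theorem G0fb2_sq_general (h m ξ₁ ξ₂ : ℝ) :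
    (G0fb2 h m ξ₁ ξ₂) ^ 2 =
      ((g0fb2 h m ξ₁ ξ₂ : ℝ) : ℂ) • (1 : Matrix (Fin 2) (Fin 2) ℂ) := by
  rw [G0fb2_eq, Matrix.sq_traceless_fin_two, mul_comm (conj _), mul_conj, normSq_fbDiffSymbol,
    g0fb2]
  congr 1
  push_cast
  ring

theorem G0fb2_sq (h m ξ₁ ξ₂ : ℝ) (hh : 0 < h) (hm : 0 ≤ m) :
    (G0fb2 h m ξ₁ ξ₂) ^ 2 =
      ((g0fb2 h m ξ₁ ξ₂ : ℝ) : ℂ) • (1 : Matrix (Fin 2) (Fin 2) ℂ) :=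
  G0fb2_sq_general h m ξ₁ ξ₂
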